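/- Let r and r' be units of O_k = ℤ[√ε]/p^kℤ[√ε]. Then the following are equivalent: (i) there exists a unit s of O_k with s·conj(s) = 1 and r = s·r' or r = −s·r', or there exists a unit s of O_k with s·conj(s) = −1 and r = s·conj(r') or r = −s·conj(r'); (ii) r·conj(r) = r'·conj(r') or r·conj(r) = −r'·conj(r'). Consequently the number of equivalence classes of units of O_k under relation (i) is (p−1)p^{k−1}/2. -/
import Mathlib
set_option maxHeartbeats 1000000
set_option synthInstance.maxHeartbeats 200000


/-- `O_k = ℤ[√ε]/p^kℤ[√ε]`. -/
abbrev Ok (ε : ℤ) (p k : ℕ) : Type := Zsqrtd ε ⧸ Ideal.span {(p : Zsqrtd ε) ^ k}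

/-- The ring endomorphism of `O_k` induced by conjugation `a + b√ε ↦ a - b√ε` on `ℤ[√ε]`. -/
noncomputable def conjBar (ε : ℤ) (p k : ℕ) : Ok ε p k →+* Ok ε p k :=
  Ideal.quotientMap _ (starRingEnd (Zsqrtd ε)) (by
    rw [Ideal.span_le]
    intro y hy
    simp only [Set.mem_singleton_iff] at hy
    subst hy
    simp only [SetLike.mem_coe, Ideal.mem_comap, map_pow, map_natCast]
    exact Ideal.mem_span_singleton_self _)

/-- The relation identifying two cusps of `X⁺_ns(p^k)`: `r ~ r'` iff `r = ±s·r'` for some unit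
`s` of norm `1`, or `r = ±s·conj(r')` for some unit `s` of norm `−1`. -/
noncomputable def cuspRel (ε : ℤ) (p k : ℕ) (r r' : (Ok ε p k)ˣ) : Prop :=
  (∃ s : (Ok ε p k)ˣ, (s : Ok ε p k) * conjBar ε p k s = 1 ∧
    ((r : Ok ε p k) = s * r' ∨ (r : Ok ε p k) = -((s : Ok ε p k) * r'))) ∨
  (∃ s : (Ok ε p k)ˣ, (s : Ok ε p k) * conjBar ε p k s = -1 ∧
    ((r : Ok ε p k) = s * conjBar ε p k r' ∨
      (r : Ok ε p k) = -((s : Ok ε p k) * conjBar ε p k r')))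

section Aux
variable (ε : ℤ) (p k : ℕ)

noncomputable abbrev okMk : Zsqrtd ε →+* Ok ε p k :=
  Ideal.Quotient.mk (Ideal.span {(p : Zsqrtd ε) ^ k})

lemma conjBar_mk (x : Zsqrtd ε) : conjBar ε p k (okMk ε p k x) = okMk ε p k (star x) :=
  Ideal.quotientMap_mk

lemma okMk_surjective : Function.Surjective (okMk ε p k) :=
  Ideal.Quotient.mk_surjective

lemma conjBar_conjBar (x : Ok ε p k) : conjBar ε p k (conjBar ε p k x) = x := by
  obtain ⟨y, rfl⟩ := okMk_surjective ε p k x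
  rw [conjBar_mk, conjBar_mk, star_star]

lemma okMk_eq_zero (x : Zsqrtd ε) :
    okMk ε p k x = 0 ↔ ((p : ℤ) ^ k ∣ x.re ∧ (p : ℤ) ^ k ∣ x.im) := by
  rw [Ideal.Quotient.eq_zero_iff_mem, Ideal.mem_span_singleton]
  have : ((p : Zsqrtd ε)) ^ k = (((p : ℤ) ^ k : ℤ) : Zsqrtd ε) := by push_cast; ring
  rw [this, Zsqrtd.intCast_dvd]

instance okCharP : CharP (Ok ε p k) (p ^ k) := by
  constructor
  intro n
  have : (n : Ok ε p k) = okMk ε p k (n : Zsqrtd ε) := by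
    simp [map_natCast]
  rw [this, okMk_eq_zero]
  constructor
  · rintro ⟨h, -⟩
    simpa using (Int.natCast_dvd_natCast.mp (by simpa using h))
  · intro h
    constructor
    · have := Int.natCast_dvd_natCast.mpr h
      push_cast at this ⊢
      simpa using this
    · simp

end Aux

section Nrm
variable (ε : ℤ) (p k : ℕ)

lemma norm_congr {a b : Zsqrtd ε} (h : a - b ∈ Ideal.span {(p : Zsqrtd ε) ^ k}) :
    ((a.norm : ZMod (p ^ k)) : ZMod (p ^ k)) = (b.norm : ZMod (p ^ k)) := by
  rw [Ideal.mem_span_singleton] at h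
  obtain ⟨w, hw⟩ := h
  have ha : a = b + (p : Zsqrtd ε) ^ k * w := by rw [← hw]; ring
  have key : (((p : ℤ) ^ k : ℤ) : Zsqrtd ε) ∣ ((a.norm - b.norm : ℤ) : Zsqrtd ε) := by
    refine ⟨b * star w + w * star b + (p : Zsqrtd ε) ^ k * (w * star w), ?_⟩
    push_cast [Zsqrtd.norm_eq_mul_conj]
    rw [ha]
    simp only [star_add, star_mul, star_pow, star_natCast]
    ring
  have : (p : ℤ) ^ k ∣ a.norm - b.norm := (Zsqrtd.intCast_dvd_intCast _ _).mp key
  have h2 : ((a.norm - b.norm : ℤ) : ZMod (p ^ k)) = 0 := by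
    rw [ZMod.intCast_zmod_eq_zero_iff_dvd]
    exact_mod_cast this
  push_cast at h2
  exact sub_eq_zero.mp h2

noncomputable def nrm : Ok ε p k → ZMod (p ^ k) :=
  Quotient.lift (fun x : Zsqrtd ε => ((Zsqrtd.norm x : ℤ) : ZMod (p ^ k)))
    (fun a b h => norm_congr ε p k ((Submodule.quotientRel_def _).mp h))

lemma nrm_mk (x : Zsqrtd ε) : nrm ε p k (okMk ε p k x) = ((x.norm : ℤ) : ZMod (p ^ k)) := rfl

lemma nrm_mul (x y : Ok ε p k) : nrm ε p k (x * y) = nrm ε p k x * nrm ε p k y := by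
  obtain ⟨a, rfl⟩ := okMk_surjective ε p k x
  obtain ⟨b, rfl⟩ := okMk_surjective ε p k y
  rw [← map_mul, nrm_mk, nrm_mk, nrm_mk, Zsqrtd.norm_mul]
  push_cast
  ring

lemma nrm_one : nrm ε p k 1 = 1 := by
  have : (1 : Ok ε p k) = okMk ε p k 1 := by simp
  rw [this, nrm_mk, Zsqrtd.norm_one]
  norm_num

noncomputable def okIota : ZMod (p ^ k) →+* Ok ε p k := ZMod.castHom dvd_rfl _

lemma okIota_injective : Function.Injective (okIota ε p k) :=
  ZMod.castHom_injective _

lemma okIota_nrm (x : Ok ε p k) : okIota ε p k (nrm ε p k x) = x * conjBar ε p k x := by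
  obtain ⟨y, rfl⟩ := okMk_surjective ε p k x
  rw [nrm_mk, conjBar_mk, map_intCast, ← map_mul, ← Zsqrtd.norm_eq_mul_conj]
  rw [show ((y.norm : Zsqrtd ε)) = ((y.norm : ℤ) : Zsqrtd ε) by norm_cast, map_intCast]

noncomputable def nrmHom : Ok ε p k →* ZMod (p ^ k) where
  toFun := nrm ε p k
  map_one' := nrm_one ε p k
  map_mul' := nrm_mul ε p k

noncomputable def NRM : (Ok ε p k)ˣ →* (ZMod (p ^ k))ˣ := Units.map (nrmHom ε p k)

lemma isUnit_of_isUnit_nrm {z : Ok ε p k} (h : IsUnit (nrm ε p k z)) : IsUnit z :=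
  isUnit_of_mul_isUnit_left (by rw [← okIota_nrm]; exact h.map (okIota ε p k))

end Nrm

section Solve

lemma zmod_solve (p : ℕ) [Fact p.Prime] (hodd : Odd p) {e : ZMod p} (he : e ≠ 0)
    (u : ZMod p) : ∃ x y : ZMod p, x ^ 2 - e * y ^ 2 = u := by
  obtain ⟨x, y, hxy⟩ := FiniteField.exists_root_sum_quadratic
    (f := Polynomial.X ^ 2 - Polynomial.C u) (g := Polynomial.C (-e) * Polynomial.X ^ 2)
    (Polynomial.degree_X_pow_sub_C (by norm_num) u)
    (by rw [Polynomial.degree_C_mul_X_pow _ (neg_ne_zero.mpr he)]; rfl)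
    (by rw [ZMod.card]; exact Nat.odd_iff.mp hodd)
  refine ⟨x, y, ?_⟩
  simp only [Polynomial.eval_sub, Polynomial.eval_pow, Polynomial.eval_X, Polynomial.eval_C,
    Polynomial.eval_mul, Polynomial.eval_neg] at hxy
  linear_combination hxy

lemma exists_solve (p : ℕ) [Fact p.Prime] {α : ℤ} (hα : ¬ (p : ℤ) ∣ α) (γ : ℤ) :
    ∃ t : ℤ, (p : ℤ) ∣ α * t - γ := by
  set A : ZMod p := (α : ZMod p) with hA
  have hA0 : A ≠ 0 := by rwa [hA, Ne, ZMod.intCast_zmod_eq_zero_iff_dvd]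
  refine ⟨(((γ : ZMod p) * A⁻¹).val : ℤ), ?_⟩
  rw [← ZMod.intCast_zmod_eq_zero_iff_dvd]
  push_cast
  rw [ZMod.natCast_val, ZMod.cast_id]
  rw [← hA]
  rw [show A * ((γ : ZMod p) * A⁻¹) = (γ : ZMod p) * (A * A⁻¹) by ring,
    mul_inv_cancel₀ hA0, mul_one, sub_self]

end Solve

lemma lift_pow (p : ℕ) [hp : Fact p.Prime] (hodd : Odd p) (ε : ℤ)
    (hε0 : ((ε : ZMod p)) ≠ 0) :
    ∀ k, 1 ≤ k → ∀ u : ℤ, ¬ (p : ℤ) ∣ u →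
      ∃ a b : ℤ, (p : ℤ) ^ k ∣ a ^ 2 - ε * b ^ 2 - u := by
  have hp2 : ¬ (p : ℤ) ∣ 2 := by
    intro h
    have h2 : p ∣ 2 := Int.ofNat_dvd.mp (by exact_mod_cast h)
    have := (Nat.prime_dvd_prime_iff_eq hp.out Nat.prime_two).mp h2
    subst this
    exact Nat.not_odd_iff_even.mpr (by decide) hodd
  have hpε : ¬ (p : ℤ) ∣ ε := fun h => hε0 ((ZMod.intCast_zmod_eq_zero_iff_dvd ε p).mpr h)
  intro k hk
  induction k with
  | zero => omega
  | succ m ih =>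
    intro u hu
    rcases Nat.eq_or_lt_of_le hk with h1 | h2
    · -- base case m = 0
      have hm : m = 0 := by omega
      subst hm
      obtain ⟨x, y, hxy⟩ := zmod_solve p hodd hε0 ((u : ZMod p))
      refine ⟨((x.val : ℤ)), ((y.val : ℤ)), ?_⟩
      rw [pow_one, ← ZMod.intCast_zmod_eq_zero_iff_dvd]
      push_cast
      rw [ZMod.natCast_val, ZMod.cast_id, ZMod.natCast_val, ZMod.cast_id]
      rw [hxy, sub_self]
    · -- inductive step, m ≥ 1
      have hm : 1 ≤ m := by omega
      obtain ⟨a, b, hd⟩ := ih hm u hu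
      obtain ⟨c, hc⟩ := hd
      by_cases hpa : (p : ℤ) ∣ a
      · -- then p does not divide b
        have hpb : ¬ (p : ℤ) ∣ b := by
          intro hb
          apply hu
          have h1 : (p : ℤ) ∣ a ^ 2 := dvd_pow hpa (by norm_num)
          have h2 : (p : ℤ) ∣ ε * b ^ 2 := Dvd.dvd.mul_left (dvd_pow hb (by norm_num)) ε
          have h3 : (p : ℤ) ∣ (p : ℤ) ^ m * c :=
            Dvd.dvd.mul_right (dvd_pow_self _ (by omega)) c
          have : u = a ^ 2 - ε * b ^ 2 - (p : ℤ) ^ m * c := by linarith [hc]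
          rw [this]
          exact dvd_sub (dvd_sub h1 h2) h3
        have hα : ¬ (p : ℤ) ∣ 2 * ε * b := by
          intro h
          rcases (Int.Prime.dvd_mul' (by exact_mod_cast hp.out) h) with h' | h'
          · rcases (Int.Prime.dvd_mul' (by exact_mod_cast hp.out) h') with h'' | h''
            · exact hp2 h''
            · exact hpε h''
          · exact hpb h'
        obtain ⟨t, ht⟩ := exists_solve p hα c
        obtain ⟨s, hs⟩ := ht
        obtain ⟨n, rfl⟩ : ∃ n, m = n + 1 := ⟨m - 1, by omega⟩
        refine ⟨a, b + t * (p : ℤ) ^ (n + 1), ⟨-s - ε * t ^ 2 * (p : ℤ) ^ n, ?_⟩⟩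
        linear_combination hc - (p : ℤ) ^ (n + 1) * hs
      · have hα : ¬ (p : ℤ) ∣ 2 * a := by
          intro h
          rcases (Int.Prime.dvd_mul' (by exact_mod_cast hp.out) h) with h' | h'
          · exact hp2 h'
          · exact hpa h'
        obtain ⟨t, ht⟩ := exists_solve p hα (-c)
        obtain ⟨s, hs⟩ := ht
        obtain ⟨n, rfl⟩ : ∃ n, m = n + 1 := ⟨m - 1, by omega⟩
        refine ⟨a + t * (p : ℤ) ^ (n + 1), b, ⟨s + t ^ 2 * (p : ℤ) ^ n, ?_⟩⟩
        linear_combination hc + (p : ℤ) ^ (n + 1) * hs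

lemma NRM_surjective (p k : ℕ) (hp : p.Prime) (hodd : Odd p) (hk : 1 ≤ k)
    (ε : ℤ) (hε : ¬ IsSquare ((ε : ZMod p))) :
    Function.Surjective (NRM ε p k) := by
  haveI : Fact p.Prime := ⟨hp⟩
  haveI : NeZero (p ^ k) := ⟨pow_ne_zero _ hp.pos.ne'⟩
  have hε0 : ((ε : ZMod p)) ≠ 0 := fun h => hε (h ▸ ⟨0, by simp⟩)
  intro u
  set n : ℤ := (((u : ZMod (p ^ k)).val : ℕ) : ℤ) with hn
  have hnu : ((n : ZMod (p ^ k))) = (u : ZMod (p ^ k)) := by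
    rw [hn]; push_cast; rw [ZMod.natCast_val, ZMod.cast_id]
  have hpu : ¬ (p : ℤ) ∣ n := by
    intro h
    have hnat : p ∣ (u : ZMod (p ^ k)).val := by
      rw [hn] at h
      exact_mod_cast h
    have hco : Nat.Coprime (u : ZMod (p ^ k)).val (p ^ k) :=
      ZMod.val_coe_unit_coprime u
    have : p ∣ Nat.gcd (u : ZMod (p ^ k)).val (p ^ k) :=
      Nat.dvd_gcd hnat (dvd_pow_self p (by omega))
    rw [hco] at this
    have := Nat.le_of_dvd one_pos this
    have := hp.two_le
    omega
  obtain ⟨a, b, hd⟩ := lift_pow p hodd ε hε0 k hk n hpu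
  set z : Ok ε p k := okMk ε p k ⟨a, b⟩ with hz
  have hnz : nrm ε p k z = (u : ZMod (p ^ k)) := by
    rw [hz, nrm_mk, ← hnu, ZMod.intCast_eq_intCast_iff]
    refine (Int.modEq_iff_dvd.mpr ?_)
    have hnorm : Zsqrtd.norm (⟨a, b⟩ : Zsqrtd ε) = a * a - ε * (b * b) := by rw [Zsqrtd.norm_def]; ring
    rw [hnorm]
    have : n - (a * a - ε * (b * b)) = -(a ^ 2 - ε * b ^ 2 - n) := by ring
    rw [this]
    exact dvd_neg.mpr (by exact_mod_cast hd)
  have hzu : IsUnit z := isUnit_of_isUnit_nrm ε p k (by rw [hnz]; exact u.isUnit)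
  obtain ⟨w, hw⟩ := hzu
  refine ⟨w, Units.ext ?_⟩
  show nrmHom ε p k (w : Ok ε p k) = (u : ZMod (p ^ k))
  rw [hw]
  exact hnz

lemma cuspRel_iff (ε : ℤ) (p k : ℕ) (r r' : (Ok ε p k)ˣ) :
    cuspRel ε p k r r' ↔
      ((r : Ok ε p k) * conjBar ε p k r = (r' : Ok ε p k) * conjBar ε p k r' ∨
       (r : Ok ε p k) * conjBar ε p k r = -((r' : Ok ε p k) * conjBar ε p k r')) := by
  constructor
  · rintro (⟨s, hs, (h | h)⟩ | ⟨s, hs, (h | h)⟩)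
    · left
      rw [h, map_mul]
      linear_combination ((r' : Ok ε p k) * conjBar ε p k ↑r') * hs
    · left
      rw [h, map_neg, map_mul]
      linear_combination ((r' : Ok ε p k) * conjBar ε p k ↑r') * hs
    · right
      rw [h, map_mul, conjBar_conjBar]
      linear_combination ((r' : Ok ε p k) * conjBar ε p k ↑r') * hs
    · right
      rw [h, map_neg, map_mul, conjBar_conjBar]
      linear_combination ((r' : Ok ε p k) * conjBar ε p k ↑r') * hs
  · have h1 : ((r' : Ok ε p k)) * ↑r'⁻¹ = 1 := Units.mul_inv r'
    have h2 : conjBar ε p k ↑r' * conjBar ε p k ↑r'⁻¹ = 1 := by rw [← map_mul, h1, map_one]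
    rintro (h | h)
    · refine Or.inl ⟨r * r'⁻¹, ?_, Or.inl ?_⟩
      · rw [Units.val_mul, map_mul]
        linear_combination ((r'⁻¹ : (Ok ε p k)ˣ) * conjBar ε p k ↑r'⁻¹ : Ok ε p k) * h +
          (((r' : Ok ε p k)) * ↑r'⁻¹) * h2 + h1
      · rw [Units.val_mul, mul_assoc, Units.inv_mul, mul_one]
    · set v : (Ok ε p k)ˣ := Units.map (conjBar ε p k).toMonoidHom r' with hv
      have hvc : (v : Ok ε p k) = conjBar ε p k ↑r' := rfl
      have hvinv : ((v⁻¹ : (Ok ε p k)ˣ) : Ok ε p k) = conjBar ε p k ↑r'⁻¹ := by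
        rw [hv, ← map_inv]
        rfl
      refine Or.inr ⟨r * v⁻¹, ?_, Or.inl ?_⟩
      · rw [Units.val_mul, map_mul, hvinv, conjBar_conjBar]
        linear_combination ((r'⁻¹ : (Ok ε p k)ˣ) * conjBar ε p k ↑r'⁻¹ : Ok ε p k) * h -
          (((r' : Ok ε p k)) * ↑r'⁻¹) * h2 - h1
      · rw [Units.val_mul, mul_assoc, ← hvc, Units.inv_mul, mul_one]

/-- Two units `r, r'` of `O_k` are related by `cuspRel` if and only if their norms agree up to
sign; consequently there are exactly `(p−1)·p^(k-1)/2` equivalence classes. -/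
theorem cuspRel_iff_norm_and_card (p k : ℕ) (hp : p.Prime) (hodd : Odd p) (hk : 1 ≤ k)
    (ε : ℤ) (hε : ¬ IsSquare (ε : ZMod p)) :
    (∀ r r' : (Ok ε p k)ˣ,
      cuspRel ε p k r r' ↔
        ((r : Ok ε p k) * conjBar ε p k r = (r' : Ok ε p k) * conjBar ε p k r' ∨
         (r : Ok ε p k) * conjBar ε p k r = -((r' : Ok ε p k) * conjBar ε p k r'))) ∧
    Nat.card (Quot (cuspRel ε p k)) = (p - 1) * p ^ (k - 1) / 2 := by
  haveI : Fact p.Prime := ⟨hp⟩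
  haveI : NeZero (p ^ k) := ⟨pow_ne_zero _ hp.pos.ne'⟩
  refine ⟨cuspRel_iff ε p k, ?_⟩
  have hp3 : 3 ≤ p := by
    have h2 := hp.two_le
    rcases Nat.lt_or_ge p 3 with h | h
    · interval_cases p
      exact absurd hodd (by decide)
    · exact h
  haveI : Fact (2 < p ^ k) := ⟨lt_of_lt_of_le (by omega) (Nat.le_self_pow (by omega) p)⟩
  set H : Subgroup (ZMod (p ^ k))ˣ := Subgroup.zpowers (-1 : (ZMod (p ^ k))ˣ) with hH
  have hneU : (-1 : (ZMod (p ^ k))ˣ) ≠ 1 := by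
    intro h
    exact ZMod.neg_one_ne_one (by simpa using congrArg Units.val h)
  have horder : orderOf (-1 : (ZMod (p ^ k))ˣ) = 2 := orderOf_eq_prime (by rw [neg_one_sq]) hneU
  have hcardH : Nat.card H = 2 := by rw [hH, Nat.card_zpowers, horder]
  have hmem : ∀ x : (ZMod (p ^ k))ˣ, x ∈ H ↔ x = 1 ∨ x = -1 := by
    intro x
    constructor
    · rintro ⟨n, rfl⟩
      rcases Int.even_or_odd n with he | ho
      · left; exact he.neg_one_zpow
      · right
        obtain ⟨m, rfl⟩ := ho
        show (-1 : (ZMod (p ^ k))ˣ) ^ (2 * m + 1) = -1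
        rw [zpow_add, zpow_one, (even_two_mul m).neg_one_zpow, one_mul]
    · rintro (rfl | rfl)
      · exact one_mem H
      · exact ⟨1, zpow_one _⟩
  -- norms as units
  have ecoe : ∀ t : (Ok ε p k)ˣ,
      okIota ε p k ((NRM ε p k t : ZMod (p ^ k))) = (t : Ok ε p k) * conjBar ε p k t :=
    fun t => okIota_nrm ε p k (t : Ok ε p k)
  have norm_iff : ∀ r r' : (Ok ε p k)ˣ,
      (((r : Ok ε p k) * conjBar ε p k r = (r' : Ok ε p k) * conjBar ε p k r' ∨
        (r : Ok ε p k) * conjBar ε p k r = -((r' : Ok ε p k) * conjBar ε p k r'))) ↔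
      (NRM ε p k r = NRM ε p k r' ∨ NRM ε p k r = -(NRM ε p k r')) := by
    intro r r'
    constructor
    · rintro (h | h)
      · left
        apply Units.ext
        apply okIota_injective ε p k
        rw [ecoe, ecoe, h]
      · right
        apply Units.ext
        apply okIota_injective ε p k
        rw [Units.val_neg, map_neg, ecoe, ecoe, h]
    · rintro (h | h)
      · left; rw [← ecoe, ← ecoe, h]
      · right; rw [← ecoe r, h, Units.val_neg, map_neg, ecoe]
  have quot_iff : ∀ A A' : (ZMod (p ^ k))ˣ,
      (QuotientGroup.mk A : (ZMod (p ^ k))ˣ ⧸ H) = QuotientGroup.mk A' ↔ (A = A' ∨ A = -A') := by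
    intro A A'
    rw [QuotientGroup.eq, hmem]
    constructor
    · rintro (h | h)
      · left; exact (inv_mul_eq_one.mp h)
      · right
        have : A' = A * (-1) := by rw [← h, mul_inv_cancel_left]
        rw [this]
        simp
    · rintro (rfl | h)
      · left; simp
      · right
        rw [h]
        simp
  set φ : (Ok ε p k)ˣ → (ZMod (p ^ k))ˣ ⧸ H := fun r => QuotientGroup.mk (NRM ε p k r) with hφ
  have key : ∀ r r' : (Ok ε p k)ˣ, cuspRel ε p k r r' ↔ φ r = φ r' := by
    intro r r'
    rw [cuspRel_iff, norm_iff, hφ]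
    exact (quot_iff _ _).symm
  let e : Quot (cuspRel ε p k) → (ZMod (p ^ k))ˣ ⧸ H := Quot.lift φ (fun a b h => (key a b).mp h)
  have hbij : Function.Bijective e := by
    constructor
    · intro x y
      obtain ⟨a, rfl⟩ := Quot.exists_rep x
      obtain ⟨b, rfl⟩ := Quot.exists_rep y
      intro h
      exact Quot.sound ((key a b).mpr h)
    · intro q
      obtain ⟨A, rfl⟩ := Quotient.exists_rep q
      obtain ⟨r, hr⟩ := NRM_surjective p k hp hodd hk ε hε A
      refine ⟨Quot.mk _ r, ?_⟩
      show (QuotientGroup.mk (NRM ε p k r) : (ZMod (p ^ k))ˣ ⧸ H) = _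
      rw [hr]
  have hcards : Nat.card (Quot (cuspRel ε p k)) = Nat.card ((ZMod (p ^ k))ˣ ⧸ H) :=
    Nat.card_congr (Equiv.ofBijective e hbij)
  have lag : Nat.card (ZMod (p ^ k))ˣ = Nat.card ((ZMod (p ^ k))ˣ ⧸ H) * Nat.card H :=
    Subgroup.card_eq_card_quotient_mul_card_subgroup H
  have hGcard : Nat.card (ZMod (p ^ k))ˣ = (p - 1) * p ^ (k - 1) := by
    rw [Nat.card_eq_fintype_card, ZMod.card_units_eq_totient,
      Nat.totient_prime_pow hp (by omega)]
    ring
  rw [hcards]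
  rw [hGcard, hcardH] at lag
  omega
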